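/- arXiv:2111.00061 — 4 statements merged into one kernel-verified Lean document; each statement's English description precedes it below -/
import Mathlib

section
/- Suppose (i) the beliefs {p_s : s ∈ S} of strategic types satisfy convex independence (for every s ∈ S, p_s ∉ co({p_{s'} : s' ∈ S, s' ≠ s})), and (ii) for every behavioral type b ∈ B, p_b ∉ co({p_s : s ∈ S}). Then there exists a contract menu (c_t)_{t∈T}, T = S ∪ B, such that ⟨p_t, c_t⟩ = v_t for all t ∈ T and, for every s ∈ S, c_s minimizes ⟨p_s, c_t⟩ over all t ∈ T. -/
/-!
Every type's belief `p t` can be strictly separated from the beliefs of the strategic types other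
than `t`: for strategic `t` by convex independence, for behavioral `t` by assumption. Tilting the
constant contract `v t` along the separating direction keeps its expected cost `v t` under `p t`
and makes it strictly more expensive under every other strategic belief, so a steep enough tilt
leaves no strategic type any gain from mimicking `t`.
-/

open Matrix

theorem exists_dotProduct_lt_of_notMem_convexHull {Ω : Type*} [Fintype Ω] {A : Set (Ω → ℝ)}
    (hA : A.Finite) {x : Ω → ℝ} (hx : x ∉ convexHull ℝ A) :
    ∃ y : Ω → ℝ, ∀ a ∈ A, x ⬝ᵥ y < a ⬝ᵥ y := by
  classical
  obtain ⟨f, u, hxu, hu⟩ := geometric_hahn_banach_point_closed (convex_convexHull ℝ A)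
    (hA.isClosed_convexHull (𝕜 := ℝ)) hx
  have hf : ∀ q : Ω → ℝ, f q = q ⬝ᵥ fun i => f fun j => if i = j then 1 else 0 :=
    LinearMap.pi_apply_eq_sum_univ f.toLinearMap
  refine ⟨fun i => f fun j => if i = j then 1 else 0, fun a ha => ?_⟩
  rw [← hf, ← hf]
  exact hxu.trans (hu a (subset_convexHull ℝ A ha))

theorem Set.Finite.exists_le_mul_of_pos {ι : Type*} {s : Set ι} (hs : s.Finite) (a g : ι → ℝ)
    (hg : ∀ i ∈ s, 0 < g i) : ∃ r : ℝ, ∀ i ∈ s, a i ≤ r * g i := by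
  obtain ⟨r, hr⟩ := (hs.image fun i => a i / g i).bddAbove
  refine ⟨r, fun i hi => ?_⟩
  rw [← div_le_iff₀ (hg i hi)]
  exact hr ⟨i, hi, rfl⟩

def tiltedContract {Ω : Type*} [Fintype Ω] (p y : Ω → ℝ) (v r : ℝ) : Ω → ℝ :=
  v • 1 + r • (y - (p ⬝ᵥ y) • 1)

theorem dotProduct_tiltedContract {Ω : Type*} [Fintype Ω] {q : Ω → ℝ} (hq : ∑ ω, q ω = 1)
    (p y : Ω → ℝ) (v r : ℝ) :
    q ⬝ᵥ tiltedContract p y v r = v + r * (q ⬝ᵥ y - p ⬝ᵥ y) := by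
  simp only [tiltedContract, dotProduct_add, dotProduct_smul, dotProduct_sub, dotProduct_one, hq,
    smul_eq_mul, mul_one]

theorem exists_fullExtraction_of_separating {Ω T : Type*} [Fintype Ω] [Finite T] (S : Set T)
    (p : T → Ω → ℝ) (v : T → ℝ) (hp : ∀ t, ∑ ω, p t ω = 1) (y : T → Ω → ℝ)
    (hy : ∀ t, ∀ s ∈ S, s ≠ t → p t ⬝ᵥ y t < p s ⬝ᵥ y t) :
    ∃ c : T → Ω → ℝ, (∀ t, p t ⬝ᵥ c t = v t) ∧ ∀ s ∈ S, ∀ t, p s ⬝ᵥ c s ≤ p s ⬝ᵥ c t := by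
  choose r hr using fun t => (Set.toFinite {s | s ∈ S ∧ s ≠ t}).exists_le_mul_of_pos
    (fun s => v s - v t) (fun s => p s ⬝ᵥ y t - p t ⬝ᵥ y t)
    (fun s hs => sub_pos.2 (hy t s hs.1 hs.2))
  refine ⟨fun t => tiltedContract (p t) (y t) (v t) (r t), fun t => ?_, fun s hs t => ?_⟩
  · rw [dotProduct_tiltedContract (hp t), sub_self, mul_zero, add_zero]
  · rcases eq_or_ne s t with rfl | hst
    · rfl
    · rw [dotProduct_tiltedContract (hp s), dotProduct_tiltedContract (hp s), sub_self, mul_zero,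
        add_zero]
      linarith [hr t s ⟨hs, hst⟩]

theorem full_extraction_with_behavioral_types_general
    {Ω T : Type*} [Fintype Ω] [Fintype T]
    (S B : Set T) (hpart : S = Bᶜ)
    (p : T → Ω → ℝ) (v : T → ℝ)
    (hp : ∀ t, p t ∈ stdSimplex ℝ Ω)
    (hCM : ∀ s ∈ S, p s ∉ convexHull ℝ (p '' {s' | s' ∈ S ∧ s' ≠ s}))
    (hB : ∀ b ∈ B, p b ∉ convexHull ℝ (p '' S)) :
    ∃ c : T → Ω → ℝ,
      (∀ t, (∑ ω, p t ω * c t ω) = v t) ∧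
      (∀ s ∈ S, ∀ t, (∑ ω, p s ω * c s ω) ≤ ∑ ω, p s ω * c t ω) := by
  have hsep : ∀ t, p t ∉ convexHull ℝ (p '' {s | s ∈ S ∧ s ≠ t}) := by
    intro t
    by_cases ht : t ∈ S
    · exact hCM t ht
    · have hS : {s | s ∈ S ∧ s ≠ t} = S :=
        Set.sep_eq_self_iff_mem_true.mpr fun s hs => ne_of_mem_of_not_mem hs ht
      rw [hS]
      exact hB t (by simpa [hpart] using ht)
  choose y hy using fun t =>
    exists_dotProduct_lt_of_notMem_convexHull ((Set.toFinite _).image p) (hsep t)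
  exact exists_fullExtraction_of_separating S p v (fun t => (hp t).2) y
    fun t s hs hst => hy t (p s) ⟨s, ⟨hs, hst⟩, rfl⟩

/-- Main theorem: full extraction with behavioral types is feasible if the
strategic beliefs satisfy the CM (convex independence) condition and each
behavioral belief lies outside the convex hull of the strategic beliefs. -/
theorem full_extraction_with_behavioral_types
    {Ω T : Type*} [Fintype Ω] [Fintype T]
    (S B : Set T) (hpart : S = Bᶜ)
    (p : T → Ω → ℝ) (v : T → ℝ)
    (hp : ∀ t, p t ∈ stdSimplex ℝ Ω)
    (hpinj : Function.Injective p)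
    (hv : ∀ t, 0 ≤ v t)
    (hCM : ∀ s ∈ S, p s ∉ convexHull ℝ (p '' {s' | s' ∈ S ∧ s' ≠ s}))
    (hB : ∀ b ∈ B, p b ∉ convexHull ℝ (p '' S)) :
    ∃ c : T → Ω → ℝ,
      (∀ t, (∑ ω, p t ω * c t ω) = v t) ∧
      (∀ s ∈ S, ∀ t, (∑ ω, p s ω * c s ω) ≤ ∑ ω, p s ω * c t ω) :=
  full_extraction_with_behavioral_types_general S B hpart p v hp hCM hB
end

section
/- (Finite Cremér–McLean) Let S be a finite set of types with distinct beliefs p_s ∈ Δ(Ω) on a finite state space Ω satisfying convex independence: for every s ∈ S, p_s ∉ co({p_{s'} : s' ≠ s}). Then for any valuations (v_s)_{s∈S} in ℝ_{≥0}, there exists a contract menu (c_s)_{s∈S}, c_s : Ω → ℝ, such that ⟨p_s, c_s⟩ = v_s for all s ∈ S and ⟨p_s, c_{s'}⟩ ≥ v_s for all s, s' ∈ S. -/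
/-!
Convex independence says that each belief `p s` can be strictly separated from the other
beliefs by a linear functional `x s`: the lottery `x s` is strictly cheaper under `p s`
than under every `p s'` with `s' ≠ s`. Type `s'` is then offered the contract
`v s' + λ (x s' - ⟨p s', x s'⟩)`, which costs `v s'` to type `s'` and
`v s' + λ (⟨p s, x s'⟩ - ⟨p s', x s'⟩)` to type `s`. Since the gaps `⟨p s, x s'⟩ - ⟨p s', x s'⟩`
are positive and there are finitely many pairs, a large enough scale `λ` makes every contract
`c s'` cost type `s` at least `v s`.
-/

theorem exists_dotProduct_lt_of_notMem_convexHull_s3 {ι : Type*} [Fintype ι]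
    {t : Set (ι → ℝ)} (ht : t.Finite) {q : ι → ℝ} (hq : q ∉ convexHull ℝ t) :
    ∃ x : ι → ℝ, ∀ r ∈ t, q ⬝ᵥ x < r ⬝ᵥ x := by
  classical
  obtain ⟨f, u, hfq, hfu⟩ := geometric_hahn_banach_point_closed (convex_convexHull ℝ t)
    (ht.isCompact_convexHull (𝕜 := ℝ)).isClosed hq
  set x : ι → ℝ := fun i => f fun j => if i = j then 1 else 0
  have hf : ∀ r : ι → ℝ, f r = r ⬝ᵥ x := LinearMap.pi_apply_eq_sum_univ f.toLinearMap
  refine ⟨x, fun r hr => ?_⟩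
  rw [← hf, ← hf]
  exact hfq.trans (hfu r (subset_convexHull ℝ t hr))

theorem exists_le_mul_of_pos {ι : Type*} [Finite ι] (a b : ι → ℝ) :
    ∃ l : ℝ, ∀ i, 0 < b i → a i ≤ l * b i := by
  obtain ⟨l, hl⟩ := Finite.bddAbove_range fun i => a i / b i
  exact ⟨l, fun i hi => (div_le_iff₀ hi).1 (hl ⟨i, rfl⟩)⟩

theorem dotProduct_affine_of_sum_eq_one {ι : Type*} [Fintype ι] {q : ι → ℝ}
    (hq : ∑ i, q i = 1) (x : ι → ℝ) (a l b : ℝ) :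
    q ⬝ᵥ (fun i => a + l * (x i - b)) = a + l * (q ⬝ᵥ x - b) := by
  have : q ⬝ᵥ (fun i => a + l * (x i - b)) = (a - l * b) * ∑ i, q i + l * (q ⬝ᵥ x) := by
    simp only [dotProduct, Finset.mul_sum, ← Finset.sum_add_distrib]
    exact Finset.sum_congr rfl fun i _ => by ring
  rw [this, hq]
  ring

theorem exists_surplus_extracting_menu_of_separating {Ω S : Type*} [Fintype Ω] [Finite S]
    (p x : S → Ω → ℝ) (v : S → ℝ) (hp : ∀ s, ∑ ω, p s ω = 1)
    (hx : ∀ s s', s ≠ s' → p s' ⬝ᵥ x s' < p s ⬝ᵥ x s') :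
    ∃ c : S → Ω → ℝ, (∀ s, p s ⬝ᵥ c s = v s) ∧ ∀ s s', v s ≤ p s ⬝ᵥ c s' := by
  obtain ⟨l, hl⟩ := exists_le_mul_of_pos (fun st : S × S => v st.1 - v st.2)
    fun st => p st.1 ⬝ᵥ x st.2 - p st.2 ⬝ᵥ x st.2
  refine ⟨fun s' ω => v s' + l * (x s' ω - p s' ⬝ᵥ x s'), fun s => ?_, fun s s' => ?_⟩
  · rw [dotProduct_affine_of_sum_eq_one (hp s)]
    ring
  · rw [dotProduct_affine_of_sum_eq_one (hp s)]
    rcases eq_or_ne s s' with rfl | hne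
    · simp
    · linarith [hl (s, s') (sub_pos.2 (hx s s' hne))]

theorem cremer_mclean_finite_general
    {Ω S : Type*} [Fintype Ω] [Fintype S]
    (p : S → Ω → ℝ) (v : S → ℝ)
    (hp : ∀ s, p s ∈ stdSimplex ℝ Ω)
    (hCM : ∀ s, p s ∉ convexHull ℝ (p '' {s' | s' ≠ s})) :
    ∃ c : S → Ω → ℝ,
      (∀ s, (∑ ω, p s ω * c s ω) = v s) ∧
      (∀ s s', v s ≤ ∑ ω, p s ω * c s' ω) := by
  choose x hx using fun s => exists_dotProduct_lt_of_notMem_convexHull_s3 (Set.toFinite _) (hCM s)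
  exact exists_surplus_extracting_menu_of_separating p x v (fun s => (hp s).2) fun s s' hne =>
    hx s' (p s) ⟨s, hne, rfl⟩

/-- Finite Crémer–McLean theorem: convex independence of the beliefs implies
full surplus extraction with incentive compatibility. -/
theorem cremer_mclean_finite
    {Ω S : Type*} [Fintype Ω] [Fintype S]
    (p : S → Ω → ℝ) (v : S → ℝ)
    (hp : ∀ s, p s ∈ stdSimplex ℝ Ω)
    (hpinj : Function.Injective p)
    (hv : ∀ s, 0 ≤ v s)
    (hCM : ∀ s, p s ∉ convexHull ℝ (p '' {s' | s' ≠ s})) :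
    ∃ c : S → Ω → ℝ,
      (∀ s, (∑ ω, p s ω * c s ω) = v s) ∧
      (∀ s s', v s ≤ ∑ ω, p s ω * c s' ω) :=
  cremer_mclean_finite_general p v hp hCM
end

section
/- Let (c_t)_{t≠b} be a contract menu over types T \ {b} that is incentive compatible for all strategic types s ∈ S (with b ∈ B behavioral). If p_b ∉ co({p_s : s ∈ S}) and each strategic type s's contract satisfies ⟨p_s, c_s⟩ ≤ v_s, then there exists a contract c_b with ⟨p_b, c_b⟩ = v_b such that the extended menu (c_b, (c_t)_{t≠b}) remains incentive compatible for all strategic types. -/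
/-!
Separate `p b` strictly from the convex hull of the strategic beliefs (compact, as the hull of
finitely many points) by a linear functional `⟨·, a⟩`, scaled so that the gap is at least `1`.
Beliefs sum to one, so adding a constant to a contract shifts every expected payment by that
constant. Hence `M • a` plus a suitable constant charges `b` exactly `v b`, while every strategic
type pays at least `v b + M`, which exceeds all its current payments once `M` is large.
-/

open Matrix

theorem dotProduct_smul_add_smul_one {Ω R : Type*} [Fintype Ω] [CommSemiring R]
    {p : Ω → R} (hp : ∑ ω, p ω = 1) (M r : R) (a : Ω → R) :
    p ⬝ᵥ (M • a + r • 1) = M * (p ⬝ᵥ a) + r := by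
  rw [dotProduct_add, dotProduct_smul, dotProduct_smul, dotProduct_one, hp, smul_eq_mul,
    smul_eq_mul, mul_one]

theorem exists_dotProduct_add_one_le_of_notMem_convexHull {Ω : Type*} [Fintype Ω]
    {K : Set (Ω → ℝ)} (hK : K.Finite) {q : Ω → ℝ} (hq : q ∉ convexHull ℝ K) :
    ∃ a : Ω → ℝ, ∀ k ∈ K, q ⬝ᵥ a + 1 ≤ k ⬝ᵥ a := by
  classical
  obtain ⟨f, u, hfq, hfK⟩ := geometric_hahn_banach_point_closed (convex_convexHull ℝ K)
    (hK.isCompact_convexHull ℝ).isClosed hq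
  set a := (dotProductEquiv ℝ Ω).symm f.toLinearMap
  have hf : ∀ x, f x = x ⬝ᵥ a := fun x => by
    rw [dotProduct_comm]
    exact (LinearMap.congr_fun ((dotProductEquiv ℝ Ω).apply_symm_apply f.toLinearMap) x).symm
  have hgap : 0 < u - f q := sub_pos.2 hfq
  refine ⟨(u - f q)⁻¹ • a, fun k hk => ?_⟩
  have hfk := hfK k (subset_convexHull ℝ K hk)
  rw [dotProduct_smul, dotProduct_smul, smul_eq_mul, smul_eq_mul, ← hf, ← hf, inv_mul_eq_div,
    inv_mul_eq_div, div_add_one hgap.ne', div_le_div_iff_of_pos_right hgap]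
  linarith

theorem exists_dotProduct_eq_forall_le_dotProduct_of_notMem_convexHull {Ω : Type*} [Fintype Ω]
    {K : Set (Ω → ℝ)} (hK : K.Finite) (hKsum : ∀ k ∈ K, ∑ ω, k ω = 1) {q : Ω → ℝ}
    (hqsum : ∑ ω, q ω = 1) (hq : q ∉ convexHull ℝ K) (w r : ℝ) :
    ∃ x : Ω → ℝ, q ⬝ᵥ x = w ∧ ∀ k ∈ K, r ≤ k ⬝ᵥ x := by
  obtain ⟨a, ha⟩ := exists_dotProduct_add_one_le_of_notMem_convexHull hK hq
  set M := max 0 (r - w)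
  have hM : 0 ≤ M := le_max_left _ _
  refine ⟨M • a + (w - M * (q ⬝ᵥ a)) • 1, ?_, fun k hk => ?_⟩
  · rw [dotProduct_smul_add_smul_one hqsum]
    ring
  · rw [dotProduct_smul_add_smul_one (hKsum k hk)]
    have := mul_le_mul_of_nonneg_left (ha k hk) hM
    linarith [le_max_right 0 (r - w)]

theorem extraction_from_behavioral_type_general
    {Ω T : Type*} [Fintype Ω] [Fintype T]
    (S : Set T)
    (b : T)
    (p : T → Ω → ℝ) (v : T → ℝ)
    (hp : ∀ t, p t ∈ stdSimplex ℝ Ω)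
    (c : T → Ω → ℝ)
    (hhull : p b ∉ convexHull ℝ (p '' S)) :
    ∃ cb : Ω → ℝ,
      (∑ ω, p b ω * cb ω) = v b ∧
      (∀ s ∈ S, (∑ ω, p s ω * c s ω) ≤ ∑ ω, p s ω * cb ω) := by
  obtain ⟨r, hr⟩ := Finite.exists_le fun t => p t ⬝ᵥ c t
  obtain ⟨cb, hcb, hcbS⟩ := exists_dotProduct_eq_forall_le_dotProduct_of_notMem_convexHull
    (Set.toFinite (p '' S)) (by rintro _ ⟨t, -, rfl⟩; exact (hp t).2) (hp b).2 hhull (v b) r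
  exact ⟨cb, hcb, fun s hs => (hr s).trans (hcbS _ ⟨s, hs, rfl⟩)⟩

/-- Corollary 1: full extraction from a behavioral type `b` is possible given
any incentive compatible menu for the other types, provided `p_b` lies outside
the convex hull of the strategic beliefs. -/
theorem extraction_from_behavioral_type
    {Ω T : Type*} [Fintype Ω] [Fintype T]
    (S B : Set T) (hpart : S = Bᶜ)
    (b : T) (hb : b ∈ B)
    (p : T → Ω → ℝ) (v : T → ℝ)
    (hp : ∀ t, p t ∈ stdSimplex ℝ Ω)
    (hpinj : Function.Injective p)
    (hv : ∀ t, 0 ≤ v t)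
    (c : T → Ω → ℝ)
    (hIC : ∀ s ∈ S, ∀ t, t ≠ b → (∑ ω, p s ω * c s ω) ≤ ∑ ω, p s ω * c t ω)
    (hcost : ∀ s ∈ S, (∑ ω, p s ω * c s ω) ≤ v s)
    (hhull : p b ∉ convexHull ℝ (p '' S)) :
    ∃ cb : Ω → ℝ,
      (∑ ω, p b ω * cb ω) = v b ∧
      (∀ s ∈ S, (∑ ω, p s ω * c s ω) ≤ ∑ ω, p s ω * cb ω) :=
  extraction_from_behavioral_type_general S b p v hp c hhull
end

section
/- In the symmetric auction single-bidder reduction: let Θ be a finite set of valuations, Ω = Θ^{n−1} the states, and for each t ∈ Θ let p_t ∈ Δ(Ω) be the conditional belief, with p_t ≠ p_{t'} for t ≠ t'. Define v_t = t · Σ_{ω : max_j ω_j ≤ t} p_t(ω). If for every t ∈ Θ, p_t ∉ co({p_{t'} : t' ∉ B, t' ≠ t}), where B ⊆ Θ is the set of behavioral valuations, then there exists an incentive compatible contract menu (c_t)_{t∈Θ} achieving full extraction: ⟨p_t, c_t⟩ = v_t for all t ∈ Θ, and ⟨p_s, c_s⟩ ≤ ⟨p_s, c_t⟩ for all s ∉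 B and all t ∈ Θ. -/
/-!
Strictly separating `p t` from the finitely many beliefs of the other non-behavioral types gives
`g` with `⟨p t, g⟩ < u < ⟨p s, g⟩`. The contract `v t + k (g - ⟨p t, g⟩)` then has expectation
`v t` under `p t`, while for `k` large its expectation under each such `p s` exceeds `max v ≥ v s`,
which is what `s` pays under its own contract.
-/

open Finset

lemma exists_sum_mul_lt_of_notMem_convexHull {ι : Type*} [Fintype ι] {S : Set (ι → ℝ)}
    (hS : S.Finite) {q : ι → ℝ} (hq : q ∉ convexHull ℝ S) :
    ∃ (g : ι → ℝ) (u : ℝ), ∑ i, q i * g i < u ∧ ∀ r ∈ S, u < ∑ i, r i * g i := by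
  classical
  obtain ⟨f, u, hfq, hfS⟩ := geometric_hahn_banach_point_closed (convex_convexHull ℝ S)
    (hS.isClosed_convexHull (𝕜 := ℝ)) hq
  have hf (x : ι → ℝ) : f x = ∑ i, x i * f fun j => if i = j then 1 else 0 :=
    (f : (ι → ℝ) →ₗ[ℝ] ℝ).pi_apply_eq_sum_univ x
  refine ⟨fun i => f fun j => if i = j then 1 else 0, u, hf q ▸ hfq, fun r hr => ?_⟩
  simpa only [hf r] using hfS r (subset_convexHull ℝ S hr)

lemma sum_mul_add_mul_sub {ι : Type*} [Fintype ι] {r : ι → ℝ} (hr : ∑ i, r i = 1)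
    (a k b : ℝ) (g : ι → ℝ) :
    ∑ i, r i * (a + k * (g i - b)) = a + k * (∑ i, r i * g i - b) := by
  have h : ∀ i, r i * (a + k * (g i - b)) = (a - k * b) * r i + k * (r i * g i) := fun i => by
    ring
  simp only [h, sum_add_distrib, ← mul_sum, hr]
  ring

lemma exists_contract_of_notMem_convexHull {ι : Type*} [Fintype ι] {S : Set (ι → ℝ)}
    (hS : S.Finite) (hS₁ : ∀ r ∈ S, ∑ i, r i = 1) {q : ι → ℝ} (hq₁ : ∑ i, q i = 1)
    (hq : q ∉ convexHull ℝ S) (a M : ℝ) :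
    ∃ c : ι → ℝ, ∑ i, q i * c i = a ∧ ∀ r ∈ S, M ≤ ∑ i, r i * c i := by
  obtain ⟨g, u, hqu, huS⟩ := exists_sum_mul_lt_of_notMem_convexHull hS hq
  set b := ∑ i, q i * g i
  have hδ : 0 < u - b := sub_pos.2 hqu
  set k := |M - a| / (u - b)
  refine ⟨fun i => a + k * (g i - b), ?_, fun r hr => ?_⟩
  · rw [sum_mul_add_mul_sub hq₁, sub_self, mul_zero, add_zero]
  · rw [sum_mul_add_mul_sub (hS₁ r hr)]
    calc M ≤ a + |M - a| := by linarith [le_abs_self (M - a)]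
      _ = a + k * (u - b) := by rw [div_mul_cancel₀ _ hδ.ne']
      _ ≤ a + k * (∑ i, r i * g i - b) := by
        gcongr
        exact (huS r hr).le

theorem auction_full_extraction_general
    {Θ : Type*} [Fintype Θ] (n : ℕ)
    (B : Set Θ)
    (p : Θ → (Fin (n - 1) → Θ) → ℝ)
    (hp : ∀ t, p t ∈ stdSimplex ℝ (Fin (n - 1) → Θ))
    (v : Θ → ℝ)
    (hcond : ∀ t, p t ∉ convexHull ℝ (p '' {t' | t' ∉ B ∧ t' ≠ t})) :
    ∃ c : Θ → (Fin (n - 1) → Θ) → ℝ,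
      (∀ t, (∑ ω, p t ω * c t ω) = v t) ∧
      (∀ s, s ∉ B → ∀ t, (∑ ω, p s ω * c s ω) ≤ ∑ ω, p s ω * c t ω) := by
  obtain ⟨M, hM⟩ := (Set.finite_range v).bddAbove
  have hcontract (t : Θ) := exists_contract_of_notMem_convexHull (Set.toFinite _)
    (by rintro _ ⟨s, -, rfl⟩; exact (hp s).2) (hp t).2 (hcond t) (v t) M
  choose c hc_eq hc_ge using hcontract
  refine ⟨c, hc_eq, fun s hs t => ?_⟩
  rcases eq_or_ne s t with rfl | hst
  · rfl
  · calc ∑ ω, p s ω * c s ω = v s := hc_eq s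
      _ ≤ M := hM ⟨s, rfl⟩
      _ ≤ ∑ ω, p s ω * c t ω := hc_ge t (p s) ⟨s, ⟨hs, hst⟩, rfl⟩

/-- Auction proposition (single-bidder reduction, symmetric case): under the
combined convex-hull condition on the conditional beliefs, there is an
incentive compatible, fully extracting contract menu. -/
theorem auction_full_extraction
    {Θ : Type*} [Fintype Θ] (n : ℕ) (hn : 2 ≤ n)
    (θval : Θ → ℝ) (hθ : ∀ t, 0 ≤ θval t) (hθinj : Function.Injective θval)
    (B : Set Θ)
    (p : Θ → (Fin (n - 1) → Θ) → ℝ)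
    (hp : ∀ t, p t ∈ stdSimplex ℝ (Fin (n - 1) → Θ))
    (hpinj : Function.Injective p)
    (v : Θ → ℝ)
    (hv : ∀ t, v t = θval t *
      ∑ ω : Fin (n - 1) → Θ, if ∀ j, θval (ω j) ≤ θval t then p t ω else 0)
    (hcond : ∀ t, p t ∉ convexHull ℝ (p '' {t' | t' ∉ B ∧ t' ≠ t})) :
    ∃ c : Θ → (Fin (n - 1) → Θ) → ℝ,
      (∀ t, (∑ ω, p t ω * c t ω) = v t) ∧
      (∀ s, s ∉ B → ∀ t, (∑ ω, p s ω * c s ω) ≤ ∑ ω, p s ω * c t ω) :=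
  auction_full_extraction_general n B p hp v hcond
end
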